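/- There exists a constant C > 0 such that for every u given by the half-plane Biot–Savart law applied to a vorticity ω, one has |u(x)| ≤ C·∫_{ℝ²₊} (y₂/(|x−y|·|x−y*|))·|ω(y)| dy for all x ∈ ℝ²₊. -/

import Mathlib

open MeasureTheory

/-- The open upper half-plane `ℝ²₊ = {x : x₂ > 0}`. -/
def halfPlane : Set (ℝ × ℝ) := {p | 0 < p.2}

/-- The half-plane Biot–Savart law, in coordinates. -/
noncomputable def BSplus (ω : ℝ × ℝ → ℝ) (x : ℝ × ℝ) : ℝ × ℝ :=
  (1 / (2 * Real.pi)) • ∫ y in halfPlane, ω y •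
    ((-(x.2 - y.2) / ((x.1 - y.1)^2 + (x.2 - y.2)^2)
        + (x.2 + y.2) / ((x.1 - y.1)^2 + (x.2 + y.2)^2),
      (x.1 - y.1) / ((x.1 - y.1)^2 + (x.2 - y.2)^2)
        - (x.1 - y.1) / ((x.1 - y.1)^2 + (x.2 + y.2)^2)) : ℝ × ℝ)

/-- The Euclidean norm on `ℝ × ℝ`. -/
noncomputable def enorm2 (v : ℝ × ℝ) : ℝ := Real.sqrt (v.1^2 + v.2^2)

/-!
Writing `p = x - y` and `q = x - y*`, the kernel of the half-plane Biot–Savart law is the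
rotation by a right angle of `p / |p|² - q / |q|²`, and inversion in the unit circle gives
`|p / |p|² - q / |q|²| = |p - q| / (|p| |q|)`. Since `p - q = (0, 2 y₂)`, the kernel has length
exactly `2 y₂ / (|x - y| |x - y*|)` away from the null set `{y = x}`, and the bound holds with
`C = 1/π`.
-/

lemma enorm2_eq_norm_toLp (v : ℝ × ℝ) : enorm2 v = ‖WithLp.toLp 2 v‖ := by
  simp only [enorm2, WithLp.prod_norm_eq_of_L2, WithLp.toLp_fst, WithLp.toLp_snd,
    Real.norm_eq_abs, sq_abs]

lemma enorm2_smul (c : ℝ) (v : ℝ × ℝ) : enorm2 (c • v) = |c| * enorm2 v := by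
  simp only [enorm2_eq_norm_toLp, WithLp.toLp_smul, norm_smul, Real.norm_eq_abs]

lemma ofReal_enorm2_integral_le {α : Type*} [MeasurableSpace α] (μ : Measure α)
    (f : α → ℝ × ℝ) :
    ENNReal.ofReal (enorm2 (∫ a, f a ∂μ)) ≤ ∫⁻ a, ENNReal.ofReal (enorm2 (f a)) ∂μ := by
  have h := (WithLp.prodContinuousLinearEquiv 2 ℝ ℝ ℝ).symm.integral_comp_comm f (μ := μ)
  simp only [WithLp.prodContinuousLinearEquiv_symm_apply] at h
  simp only [enorm2_eq_norm_toLp, ofReal_norm, ← h]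
  exact enorm_integral_le_lintegral_enorm _

lemma enorm2_inversion_sub_inversion {a b c : ℝ} (hb : a ^ 2 + b ^ 2 ≠ 0)
    (hc : a ^ 2 + c ^ 2 ≠ 0) :
    enorm2 ((-b / (a ^ 2 + b ^ 2) + c / (a ^ 2 + c ^ 2),
        a / (a ^ 2 + b ^ 2) - a / (a ^ 2 + c ^ 2)))
      = |c - b| / (√(a ^ 2 + b ^ 2) * √(a ^ 2 + c ^ 2)) := by
  have hsq : (-b / (a ^ 2 + b ^ 2) + c / (a ^ 2 + c ^ 2)) ^ 2
      + (a / (a ^ 2 + b ^ 2) - a / (a ^ 2 + c ^ 2)) ^ 2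
      = (c - b) ^ 2 / ((a ^ 2 + b ^ 2) * (a ^ 2 + c ^ 2)) := by
    field_simp
    ring
  rw [enorm2, hsq, Real.sqrt_div' _ (by positivity), Real.sqrt_sq_eq_abs,
    Real.sqrt_mul (by positivity)]

noncomputable def bsKernel (x y : ℝ × ℝ) : ℝ × ℝ :=
  (-(x.2 - y.2) / ((x.1 - y.1)^2 + (x.2 - y.2)^2) + (x.2 + y.2) / ((x.1 - y.1)^2 + (x.2 + y.2)^2),
    (x.1 - y.1) / ((x.1 - y.1)^2 + (x.2 - y.2)^2) - (x.1 - y.1) / ((x.1 - y.1)^2 + (x.2 + y.2)^2))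

lemma BSplus_eq_integral_bsKernel (ω : ℝ × ℝ → ℝ) (x : ℝ × ℝ) :
    BSplus ω x = (1 / (2 * Real.pi)) • ∫ y in halfPlane, ω y • bsKernel x y :=
  rfl

lemma enorm2_bsKernel {x y : ℝ × ℝ} (hxy : x ≠ y) (hx : 0 < x.2) (hy : 0 ≤ y.2) :
    enorm2 (bsKernel x y) = 2 * y.2 /
      (√((x.1 - y.1) ^ 2 + (x.2 - y.2) ^ 2) * √((x.1 - y.1) ^ 2 + (x.2 + y.2) ^ 2)) := by
  have hp : (x.1 - y.1) ^ 2 + (x.2 - y.2) ^ 2 ≠ 0 := by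
    contrapose! hxy
    ext <;> nlinarith [sq_nonneg (x.1 - y.1), sq_nonneg (x.2 - y.2)]
  have hq : (x.1 - y.1) ^ 2 + (x.2 + y.2) ^ 2 ≠ 0 := by positivity
  rw [bsKernel, enorm2_inversion_sub_inversion hp hq, add_sub_sub_cancel, ← two_mul,
    abs_of_nonneg (by positivity)]

theorem biot_savart_improved_bound :
    ∃ C > 0, ∀ (ω : ℝ × ℝ → ℝ) (x : ℝ × ℝ), x ∈ halfPlane →
      ENNReal.ofReal (enorm2 (BSplus ω x)) ≤ ENNReal.ofReal C *
        ∫⁻ y in halfPlane, ENNReal.ofReal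
          (y.2 / (Real.sqrt ((x.1 - y.1)^2 + (x.2 - y.2)^2)
            * Real.sqrt ((x.1 - y.1)^2 + (x.2 + y.2)^2)) * |ω y|) := by
  refine ⟨1 / Real.pi, by positivity, fun ω x hx => ?_⟩
  have hmeas : MeasurableSet halfPlane := measurableSet_lt measurable_const measurable_snd
  have hkernel : ∀ᵐ y ∂volume.restrict halfPlane,
      ENNReal.ofReal (enorm2 (ω y • bsKernel x y)) = ENNReal.ofReal 2 * ENNReal.ofReal
        (y.2 / (√((x.1 - y.1) ^ 2 + (x.2 - y.2) ^ 2) * √((x.1 - y.1) ^ 2 + (x.2 + y.2) ^ 2))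
          * |ω y|) := by
    filter_upwards [ae_restrict_mem hmeas, ae_restrict_of_ae (Measure.ae_ne volume x)]
      with y (hy : 0 < y.2) hyx
    rw [← ENNReal.ofReal_mul zero_le_two, enorm2_smul, enorm2_bsKernel hyx.symm hx hy.le]
    ring_nf
  calc ENNReal.ofReal (enorm2 (BSplus ω x))
      = ENNReal.ofReal (1 / (2 * Real.pi)) *
          ENNReal.ofReal (enorm2 (∫ y in halfPlane, ω y • bsKernel x y)) := by
        rw [BSplus_eq_integral_bsKernel, enorm2_smul, abs_of_pos (by positivity),
          ENNReal.ofReal_mul (by positivity)]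
    _ ≤ ENNReal.ofReal (1 / (2 * Real.pi)) *
          ∫⁻ y in halfPlane, ENNReal.ofReal (enorm2 (ω y • bsKernel x y)) := by
        gcongr
        exact ofReal_enorm2_integral_le _ _
    _ = ENNReal.ofReal (1 / Real.pi) * ∫⁻ y in halfPlane, ENNReal.ofReal
          (y.2 / (√((x.1 - y.1) ^ 2 + (x.2 - y.2) ^ 2) * √((x.1 - y.1) ^ 2 + (x.2 + y.2) ^ 2))
            * |ω y|) := by
        rw [lintegral_congr_ae hkernel, lintegral_const_mul' _ _ ENNReal.ofReal_ne_top,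
          ← mul_assoc, ← ENNReal.ofReal_mul (by positivity)]
        congr 2
        field_simp
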